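/- Let A = M_D(ℂ) with an elementary Γ-grading given by φ: {1,…,D} → Γ and commutation factor ε. Then tr_ε(A) = Σ_i ε(φ(i),φ(i)) a_{ii} defines an ε-trace on A (i.e. tr_ε(ab) = ε(|a|,|b|) tr_ε(ba) for homogeneous a,b), and every ε-trace on A is a scalar multiple of tr_ε. -/

import Mathlib

/-- The homogeneous component of degree `α` of the elementary `Γ`-grading on `M_D(ℂ)`
induced by `φ : Fin D → Γ`. -/
noncomputable def elemGrading {Γ : Type*} [AddCommGroup Γ] {D : ℕ} (φ : Fin D → Γ) (α : Γ) :
    Submodule ℂ (Matrix (Fin D) (Fin D) ℂ) where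
  carrier := {M | ∀ i j, φ i - φ j ≠ α → M i j = 0}
  add_mem' := by
    intro a b ha hb i j h
    simp [Matrix.add_apply, ha i j h, hb i j h]
  zero_mem' := by intro i j _; rfl
  smul_mem' := by
    intro c a ha i j h
    simp [Matrix.smul_apply, ha i j h]

/-- The ε-trace on `M_D(ℂ)` for the elementary grading given by `φ`. -/
noncomputable def epsTrace {Γ : Type*} [AddCommGroup Γ] {D : ℕ} (φ : Fin D → Γ)
    (ε : Γ → Γ → ℂ) (M : Matrix (Fin D) (Fin D) ℂ) : ℂ :=
  ∑ i, ε (φ i) (φ i) * M i i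
/-!
For a commutation factor, `ε (u, u) = ±1` and `ε (u, -u) = ε (u, u)⁻¹`, which gives
`ε (x - y, y - x) ε (y, y) = ε (x, x)`. On matrix units `E_ik ∈ A_{φ i - φ k}` and
`E_ki ∈ A_{φ k - φ i}` this identity is exactly the ε-trace property of `tr_ε`, and the sum over
all entries reduces to it. Conversely, an ε-trace `T` kills `E_ij = E_ii E_ij` for `i ≠ j`
(since `E_ij E_ii = 0`), and comparing `T (E_i0 E_0i)` with `T (E_0i E_i0)` shows that
`T (E_ii) / ε (φ i, φ i)` does not depend on `i`.
-/

structure IsCommutationFactor {Γ : Type*} [AddCommGroup Γ] (ε : Γ → Γ → ℂ) : Prop where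
  mul_swap : ∀ a b, ε a b * ε b a = 1
  map_add_right : ∀ a b c, ε a (b + c) = ε a b * ε a c
  map_add_left : ∀ a b c, ε (a + b) c = ε a c * ε b c

namespace IsCommutationFactor

variable {Γ : Type*} [AddCommGroup Γ] {ε : Γ → Γ → ℂ}

theorem ne_zero (hε : IsCommutationFactor ε) (a b : Γ) : ε a b ≠ 0 :=
  left_ne_zero_of_mul_eq_one (hε.mul_swap a b)

theorem map_zero_right (hε : IsCommutationFactor ε) (a : Γ) : ε a 0 = 1 := by
  have h := hε.map_add_right a 0 0
  rw [add_zero] at h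
  exact (mul_eq_left₀ (hε.ne_zero a 0)).mp h.symm

theorem map_zero_left (hε : IsCommutationFactor ε) (b : Γ) : ε 0 b = 1 := by
  have h := hε.map_add_left 0 0 b
  rw [add_zero] at h
  exact (mul_eq_left₀ (hε.ne_zero 0 b)).mp h.symm

theorem map_neg_right (hε : IsCommutationFactor ε) (a b : Γ) : ε a (-b) = (ε a b)⁻¹ := by
  refine eq_inv_of_mul_eq_one_right ?_
  rw [← hε.map_add_right, add_neg_cancel, hε.map_zero_right]

theorem map_neg_left (hε : IsCommutationFactor ε) (a b : Γ) : ε (-a) b = (ε a b)⁻¹ := by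
  refine eq_inv_of_mul_eq_one_right ?_
  rw [← hε.map_add_left, add_neg_cancel, hε.map_zero_left]

theorem map_sub_sub_mul_self (hε : IsCommutationFactor ε) (x y : Γ) :
    ε (x - y) (y - x) * ε y y = ε x x := by
  have hxx := hε.ne_zero x x
  have hyy := hε.ne_zero y y
  rw [sub_eq_add_neg, sub_eq_add_neg, hε.map_add_left, hε.map_add_right, hε.map_add_right,
    hε.map_neg_right, hε.map_neg_left, hε.map_neg_left, hε.map_neg_right, inv_inv]
  field_simp
  linear_combination hε.mul_swap x y - hε.mul_swap x x

end IsCommutationFactor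

section ElementaryGrading

open Matrix

variable {Γ : Type*} [AddCommGroup Γ] {D : ℕ} {φ : Fin D → Γ} {ε : Γ → Γ → ℂ}

theorem sub_eq_of_mem_elemGrading {α : Γ} {a : Matrix (Fin D) (Fin D) ℂ}
    (ha : a ∈ elemGrading φ α) {i j : Fin D} (hij : a i j ≠ 0) : φ i - φ j = α :=
  not_not.mp fun h => hij (ha i j h : a i j = 0)

theorem single_mem_elemGrading (i j : Fin D) (c : ℂ) :
    single i j c ∈ elemGrading φ (φ i - φ j) := by
  intro k l hkl
  refine single_apply_of_ne _ _ _ _ _ ?_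
  rintro ⟨rfl, rfl⟩
  exact hkl rfl

theorem epsTrace_mul_of_mem_elemGrading (hε : IsCommutationFactor ε) {α β : Γ}
    {a b : Matrix (Fin D) (Fin D) ℂ} (ha : a ∈ elemGrading φ α) (hb : b ∈ elemGrading φ β) :
    epsTrace φ ε (a * b) = ε α β * epsTrace φ ε (b * a) := by
  simp only [epsTrace, mul_apply, Finset.mul_sum]
  rw [Finset.sum_comm (f := fun k i => ε α β * (ε (φ k) (φ k) * (b k i * a i k)))]
  refine Finset.sum_congr rfl fun i _ => Finset.sum_congr rfl fun k _ => ?_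
  by_cases hak : a i k = 0
  · simp [hak]
  by_cases hbk : b k i = 0
  · simp [hbk]
  obtain rfl := sub_eq_of_mem_elemGrading ha hak
  obtain rfl := sub_eq_of_mem_elemGrading hb hbk
  linear_combination (-(a i k * b k i)) * hε.map_sub_sub_mul_self (φ i) (φ k)

theorem Matrix.linearMap_apply_eq_sum_diag {n R : Type*} [Fintype n] [DecidableEq n]
    [CommSemiring R] (T : Matrix n n R →ₗ[R] R)
    (hT : ∀ i j, i ≠ j → T (single i j 1) = 0) (M : Matrix n n R) :
    T M = ∑ i, M i i * T (single i i 1) := by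
  have hsingle : ∀ i j, T (single i j (M i j)) = M i j * T (single i j 1) := fun i j => by
    rw [← smul_eq_mul, ← map_smul, smul_single, smul_eq_mul, mul_one]
  conv_lhs => rw [matrix_eq_sum_single M]
  simp only [map_sum, hsingle]
  refine Finset.sum_congr rfl fun i _ => Finset.sum_eq_single i (fun j _ hji => ?_) (by simp)
  rw [hT i j hji.symm, mul_zero]

section EpsTraceCondition

variable {T : Matrix (Fin D) (Fin D) ℂ →ₗ[ℂ] ℂ}
  (hT : ∀ α β, ∀ a ∈ elemGrading φ α, ∀ b ∈ elemGrading φ β, T (a * b) = ε α β * T (b * a))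
include hT

theorem apply_single_eq_zero_of_ne {i j : Fin D} (hij : i ≠ j) : T (single i j 1) = 0 := by
  have h := hT _ _ _ (single_mem_elemGrading i i 1) _ (single_mem_elemGrading i j 1)
  rwa [single_mul_single_same, single_mul_single_of_ne (h := hij.symm), mul_one, map_zero,
    mul_zero] at h

theorem exists_apply_single_self_eq (hε : IsCommutationFactor ε) :
    ∃ c : ℂ, ∀ i, T (single i i 1) = c * ε (φ i) (φ i) := by
  rcases isEmpty_or_nonempty (Fin D) with hD | ⟨⟨i₀⟩⟩
  · exact ⟨0, isEmptyElim⟩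
  refine ⟨ε (φ i₀) (φ i₀) * T (single i₀ i₀ 1), fun i => ?_⟩
  have h := hT _ _ _ (single_mem_elemGrading i i₀ 1) _ (single_mem_elemGrading i₀ i 1)
  rw [single_mul_single_same, single_mul_single_same, mul_one] at h
  rw [h, ← hε.map_sub_sub_mul_self (φ i) (φ i₀)]
  linear_combination (-(ε (φ i - φ i₀) (φ i₀ - φ i) * T (single i₀ i₀ 1))) *
    hε.mul_swap (φ i₀) (φ i₀)

end EpsTraceCondition

end ElementaryGrading

/-- `tr_ε` is an ε-trace on the elementary ε-graded matrix algebra, and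
every ε-trace is a scalar multiple of it. -/
theorem epsTrace_is_epsTrace_and_unique {Γ : Type*} [AddCommGroup Γ] {D : ℕ}
    (φ : Fin D → Γ) (ε : Γ → Γ → ℂ)
    (h1 : ∀ i j, ε i j * ε j i = 1)
    (h2 : ∀ i j k, ε i (j + k) = ε i j * ε i k)
    (h3 : ∀ i j k, ε (i + j) k = ε i k * ε j k) :
    (∀ α β, ∀ a ∈ elemGrading φ α, ∀ b ∈ elemGrading φ β,
      epsTrace φ ε (a * b) = ε α β * epsTrace φ ε (b * a)) ∧
    (∀ T : Matrix (Fin D) (Fin D) ℂ →ₗ[ℂ] ℂ,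
      (∀ α β, ∀ a ∈ elemGrading φ α, ∀ b ∈ elemGrading φ β,
        T (a * b) = ε α β * T (b * a)) →
      ∃ c : ℂ, ∀ M, T M = c * epsTrace φ ε M) := by
  have hε : IsCommutationFactor ε := ⟨h1, h2, h3⟩
  refine ⟨fun α β a ha b hb => epsTrace_mul_of_mem_elemGrading hε ha hb, fun T hT => ?_⟩
  obtain ⟨c, hc⟩ := exists_apply_single_self_eq hT hε
  refine ⟨c, fun M => ?_⟩
  rw [Matrix.linearMap_apply_eq_sum_diag T (fun i j => apply_single_eq_zero_of_ne hT) M, epsTrace,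
    Finset.mul_sum]
  exact Finset.sum_congr rfl fun i _ => by rw [hc i]; ring
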